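/- arXiv:0807.1249 — 2 statements merged into one kernel-verified Lean document; each statement's English description precedes it below -/
import Mathlib

section
/- In the n-dimensional Morris orientation, suppose the simple principal pivoting algorithm with the least-index rule under a permutation π visits a vertex v with v_{π(i+1)} = … = v_{π(n)} = 1. Then all subsequently visited vertices u also satisfy u_{π(i+1)} = … = u_{π(n)} = 1. -/
/-!
Unless `v` is the all-ones global sink, some `0`-coordinate of `v` is outgoing. Indeed, the
parity of the run of ones above a coordinate flips when passing to the next coordinate if that
one is a `1`; around the odd cycle of coordinates the parity cannot flip everywhere, and where it
does not, the next coordinate is a `0` with an even run, i.e. an outgoing `0`. As `v (π j) = 1`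
for `j ≥ i`, this outgoing coordinate is `π m` with `m < i`, so the least-index rule pivots on a
coordinate `π m'` with `m' ≤ m < i` and the ones at `π j`, `j ≥ i`, survive the step.
-/

/-- Flip coordinate `i` of a cube vertex. -/
def cflip {n : ℕ} (v : Fin n → Bool) (i : Fin n) : Fin n → Bool :=
  fun j => if j = i then !v j else v j

/-- `Φ v i = true` means the edge between `v` and `v ⊕ i` is incoming at `v` (sign `+`);
`Φ v i = false` means it is outgoing at `v` (sign `-`). Consistency says the two
endpoints of an edge agree about its direction. -/
def Consistent {n : ℕ} (Φ : (Fin n → Bool) → Fin n → Bool) : Prop :=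
  ∀ v i, Φ (cflip v i) i ≠ Φ v i

/-- `w` lies in the subcube spanned from `u` by the coordinate set `C`. -/
def InSubcube {n : ℕ} (u : Fin n → Bool) (C : Finset (Fin n)) (w : Fin n → Bool) : Prop :=
  ∀ j ∉ C, w j = u j

/-- Every (nonempty) subcube has a unique sink. -/
def HasUniqueSinks {n : ℕ} (Φ : (Fin n → Bool) → Fin n → Bool) : Prop :=
  ∀ (u : Fin n → Bool) (C : Finset (Fin n)),
    ∃! w, InSubcube u C w ∧ ∀ i ∈ C, Φ w i = true

/-- A unique-sink orientation of the `n`-cube. -/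
def IsUSO {n : ℕ} (Φ : (Fin n → Bool) → Fin n → Bool) : Prop :=
  Consistent Φ ∧ HasUniqueSinks Φ

/-- Directed edge relation of the orientation: `v → u`. -/
def Step {n : ℕ} (Φ : (Fin n → Bool) → Fin n → Bool) (v u : Fin n → Bool) : Prop :=
  ∃ i, Φ v i = false ∧ u = cflip v i

/-- Length of the run of `1`s at positions `j+1, j+2, …` (cyclically), i.e. the state
of the Morris transducer just before reading `v j` is `T` iff this run length is odd. -/
def morrisRun {n : ℕ} [NeZero n] (v : Fin n → Bool) (j : Fin n) : ℕ :=
  let K := (Finset.range n).filter (fun k : ℕ => v (j + 1 + (Fin.ofNat n k)) = false)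
  if h : K.Nonempty then K.min' h else 0

/-- The Morris orientation of the `n`-cube (`n` odd), given by the two-state transducer:
the all-ones vertex is the global sink; otherwise the edge at `v` in coordinate `j` is
outgoing (`false`) iff `v j` agrees with the parity of the run of ones above `j`. -/
def morris {n : ℕ} [NeZero n] (v : Fin n → Bool) : Fin n → Bool :=
  fun j =>
    if ∀ i, v i = true then true
    else !(v j == decide (Odd (morrisRun v j)))

/-- One step of simple principal pivoting with the least-index rule under the
permutation `π`: among the coordinates with outgoing edges, pivot on `π j` with
`j` minimal such that `π j` has an outgoing edge. -/
def murtyPiNext {n : ℕ} (Φ : (Fin n → Bool) → Fin n → Bool)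
    (π : Equiv.Perm (Fin n)) (v : Fin n → Bool) : Fin n → Bool :=
  let O := Finset.univ.filter (fun j => Φ v (π j) = false)
  if h : O.Nonempty then cflip v (π (O.min' h)) else v

open Fin.NatCast Fin.CommRing

theorem Fin.exists_succ_eq_of_odd {n : ℕ} [NeZero n] (hn : Odd n) (f : Fin n → Bool) :
    ∃ q, f (q + 1) = f q := by
  by_contra! h
  have alternate : ∀ q, f (q + 1) = !f q := fun q => Bool.eq_not.mpr (h q)
  have odd_steps : ∀ k : ℕ, f ((2 * k + 1 : ℕ) : Fin n) = !f 0 := by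
    intro k
    induction k with
    | zero => simpa using alternate 0
    | succ k ih =>
      have : ((2 * (k + 1) + 1 : ℕ) : Fin n) = ((2 * k + 1 : ℕ) : Fin n) + 1 + 1 := by
        push_cast; ring
      rw [this, alternate, alternate, ih, Bool.not_not]
  obtain ⟨k, rfl⟩ := hn
  have := odd_steps k
  rw [Fin.natCast_self] at this
  exact Bool.not_ne_self _ this.symm

section MorrisRun

variable {n : ℕ} [NeZero n]

theorem morrisRun_spec {v : Fin n → Bool} (q : Fin n) {p : Fin n} (hp : v p = false) :
    v (q + 1 + (morrisRun v q : Fin n)) = false ∧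
      ∀ k < morrisRun v q, v (q + 1 + (k : Fin n)) = true := by
  classical
  set K := (Finset.range n).filter (fun k : ℕ => v (q + 1 + (k : Fin n)) = false)
  have hK : K.Nonempty := by
    refine ⟨(p - (q + 1)).val,
      Finset.mem_filter.mpr ⟨Finset.mem_range.mpr (p - (q + 1)).isLt, ?_⟩⟩
    rwa [Fin.cast_val_eq_self, add_sub_cancel]
  have hrun : morrisRun v q = K.min' hK := dif_pos hK
  obtain ⟨hlt, hfalse⟩ := Finset.mem_filter.mp (K.min'_mem hK)
  refine ⟨hrun ▸ hfalse, fun k hk => ?_⟩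
  by_contra hk_false
  have hkK : k ∈ K := Finset.mem_filter.mpr ⟨Finset.mem_range.mpr
    (hk.trans (hrun ▸ Finset.mem_range.mp hlt)), by simpa using hk_false⟩
  exact absurd (K.min'_le k hkK) (by omega)

theorem morrisRun_eq {v : Fin n → Bool} {q : Fin n} {m : ℕ}
    (hm : v (q + 1 + (m : Fin n)) = false) (hlt : ∀ k < m, v (q + 1 + (k : Fin n)) = true) :
    morrisRun v q = m := by
  obtain ⟨hrun, hrun_lt⟩ := morrisRun_spec q hm
  rcases lt_trichotomy (morrisRun v q) m with h | h | h
  · simp [hlt _ h] at hrun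
  · exact h
  · simp [hrun_lt _ h] at hm

theorem morrisRun_eq_zero {v : Fin n → Bool} {q : Fin n} (h : v (q + 1) = false) :
    morrisRun v q = 0 :=
  morrisRun_eq (by simpa using h) (by simp)

theorem morrisRun_eq_succ {v : Fin n → Bool} {q p : Fin n} (hp : v p = false)
    (h : v (q + 1) = true) : morrisRun v q = morrisRun v (q + 1) + 1 := by
  obtain ⟨hrun, hrun_lt⟩ := morrisRun_spec (q + 1) hp
  apply morrisRun_eq
  · push_cast
    rwa [← add_assoc, add_right_comm (q + 1)]
  · rintro (_ | k) hk
    · simpa using h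
    · push_cast
      rw [← add_assoc, add_right_comm (q + 1)]
      exact hrun_lt k (by omega)

theorem exists_false_even_morrisRun (hn : Odd n) {v : Fin n → Bool} {p : Fin n}
    (hp : v p = false) : ∃ j, v j = false ∧ Even (morrisRun v j) := by
  obtain ⟨q, hq⟩ := Fin.exists_succ_eq_of_odd hn (fun q => decide (Even (morrisRun v q)))
  cases hv : v (q + 1)
  · refine ⟨q + 1, hv, ?_⟩
    simpa [morrisRun_eq_zero hv] using hq
  · simp [morrisRun_eq_succ hp hv, Nat.even_add_one, -Nat.not_even_iff_odd] at hq

end MorrisRun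

section Morris

variable {n : ℕ} [NeZero n]

theorem morris_of_forall_eq_true {v : Fin n → Bool} (hv : ∀ j, v j = true) (j : Fin n) :
    morris v j = true :=
  if_pos hv

theorem exists_false_morris_eq_false (hn : Odd n) {v : Fin n → Bool} {p : Fin n}
    (hp : v p = false) : ∃ j, v j = false ∧ morris v j = false := by
  obtain ⟨j, hj, heven⟩ := exists_false_even_morrisRun hn hp
  refine ⟨j, hj, ?_⟩
  rw [morris, if_neg fun hv => by simp [hv p] at hp, hj]
  simpa using heven

end Morris

section MurtyPi

variable {n : ℕ} (Φ : (Fin n → Bool) → Fin n → Bool) (π : Equiv.Perm (Fin n))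

theorem murtyPiNext_of_forall_eq_true {v : Fin n → Bool} (hv : ∀ j, Φ v j = true) :
    murtyPiNext Φ π v = v :=
  dif_neg (by simp [hv])

theorem murtyPiNext_apply_of_lt {v : Fin n → Bool} {m j : Fin n} (hm : Φ v (π m) = false)
    (hmj : m < j) : murtyPiNext Φ π v (π j) = v (π j) := by
  classical
  set O := Finset.univ.filter (fun j => Φ v (π j) = false)
  have hmO : m ∈ O := by simpa [O] using hm
  have hstep : murtyPiNext Φ π v = cflip v (π (O.min' ⟨m, hmO⟩)) := dif_pos ⟨m, hmO⟩
  have hne : π j ≠ π (O.min' ⟨m, hmO⟩) :=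
    π.injective.ne (((O.min'_le m hmO).trans_lt hmj).ne')
  rw [hstep, cflip, if_neg hne]

end MurtyPi

theorem morris_murtyPiNext_apply_of_forall_le {n : ℕ} [NeZero n] (hn : Odd n)
    (π : Equiv.Perm (Fin n)) {i : ℕ} {v : Fin n → Bool}
    (hv : ∀ j : Fin n, i ≤ j.val → v (π j) = true) :
    ∀ j : Fin n, i ≤ j.val → murtyPiNext morris π v (π j) = true := by
  intro j hj
  by_cases hall : ∀ p, v p = true
  · rw [murtyPiNext_of_forall_eq_true _ _ (morris_of_forall_eq_true hall)]
    exact hv j hj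
  push Not at hall
  obtain ⟨p, hp⟩ := hall
  obtain ⟨j₀, hj₀, hout⟩ := exists_false_morris_eq_false hn (Bool.eq_false_iff.mpr hp)
  have hlt : (π.symm j₀).val < i := by
    by_contra! hge
    simpa [hj₀] using hv _ hge
  rw [murtyPiNext_apply_of_lt morris π (m := π.symm j₀) (by simpa using hout)
    (Fin.lt_def.mpr (by omega))]
  exact hv j hj

/-- in the Morris orientation (`n` odd), once the least-index
algorithm under `π` visits a vertex `v` with `v (π j) = 1` for all `j ≥ i`,
every subsequently visited vertex `u` satisfies `u (π j) = 1` for all `j ≥ i`. -/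
theorem morris_murtyPi_ones_stay {n : ℕ} [NeZero n] (hn : Odd n)
    (π : Equiv.Perm (Fin n)) (i : ℕ) (v : Fin n → Bool)
    (hv : ∀ j : Fin n, i ≤ j.val → v (π j) = true) :
    ∀ N : ℕ, ∀ j : Fin n, i ≤ j.val →
      ((murtyPiNext (morris) π)^[N] v) (π j) = true :=
  Function.Iterate.rec _ hv (fun _ => morris_murtyPiNext_apply_of_forall_le hn π)
end

section
/- In a 2-up-uniform unique-sink orientation of the n-cube with global sink t, every directed path from the all-zeros vertex 0 to t has length exactly |t| (the number of ones in t), and along any such path every traversed edge flips a 0 to a 1. -/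
/-- `Φ` is 2-up-uniform: whenever `u` has `u i = u j = 0` (`i ≠ j`) and `u` is
the source of the 2-dimensional subcube spanned by coordinates `i, j`
(both edges at `u` outgoing), that subcube is uniformly oriented, i.e. its two
upper edges are also directed from the `0`-side to the `1`-side. -/
def TwoUpUniform {n : ℕ} (Φ : (Fin n → Bool) → Fin n → Bool) : Prop :=
  ∀ (u : Fin n → Bool) (i j : Fin n), i ≠ j →
    u i = false → u j = false →
    Φ u i = false → Φ u j = false →
    Φ (cflip u i) j = false ∧ Φ (cflip u j) i = false

/-- The orientation obtained from `Φ` by reversing all edges. -/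
def reverseAll {n : ℕ} (Φ : (Fin n → Bool) → Fin n → Bool) :
    (Fin n → Bool) → Fin n → Bool :=
  fun v i => !(Φ v i)

/-- `Φ` is 2-uniform: both `Φ` and its total reversal are 2-up-uniform. -/
def TwoUniform {n : ℕ} (Φ : (Fin n → Bool) → Fin n → Bool) : Prop :=
  TwoUpUniform Φ ∧ TwoUpUniform (reverseAll Φ)

lemma cflip_self {n : ℕ} (v : Fin n → Bool) (i : Fin n) : cflip v i i = !v i := by
  simp [cflip]
lemma cflip_ne {n : ℕ} (v : Fin n → Bool) {i k : Fin n} (h : k ≠ i) : cflip v i k = v k := by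
  simp [cflip, h]
lemma cflip_cflip {n : ℕ} (v : Fin n → Bool) (i : Fin n) : cflip (cflip v i) i = v := by
  funext k; by_cases h : k = i
  · subst h; simp [cflip]
  · simp [cflip, h]
lemma cflip_comm {n : ℕ} (v : Fin n → Bool) (i j : Fin n) (hij : i ≠ j) :
    cflip (cflip v i) j = cflip (cflip v j) i := by
  funext k
  by_cases hki : k = i
  · subst hki; rw [cflip_ne _ hij, cflip_self, cflip_self, cflip_ne _ hij]
  · by_cases hkj : k = j
    · subst hkj; rw [cflip_self, cflip_ne _ (Ne.symm hij), cflip_ne _ hki, cflip_self]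
    · rw [cflip_ne _ hkj, cflip_ne _ hki, cflip_ne _ hki, cflip_ne _ hkj]

/-- any vertex of a 2-dim subcube is one of its four vertices -/
lemma subcube_two {n : ℕ} (w y : Fin n → Bool) (i j : Fin n) (hij : i ≠ j)
    (hwi : w i = false) (hwj : w j = false)
    (hy : InSubcube w {i, j} y) :
    y = w ∨ y = cflip w i ∨ y = cflip w j ∨ y = cflip (cflip w i) j := by
  have hoff : ∀ k, k ≠ i → k ≠ j → y k = w k := by
    intro k h1 h2; exact hy k (by simp [h1, h2])
  have heq : ∀ (a b : Bool), y i = a → y j = b →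
      y = fun k => if k = i then a else if k = j then b else w k := by
    intro a b ha hb; funext k
    by_cases h1 : k = i
    · subst h1; simp [ha]
    · by_cases h2 : k = j
      · subst h2; simp [h1, hb]
      · simp [h1, h2, hoff k h1 h2]
  cases hyi : y i <;> cases hyj : y j
  · left; rw [heq false false hyi hyj]; funext k
    by_cases h1 : k = i
    · subst h1; simp [hwi]
    · by_cases h2 : k = j
      · subst h2; simp [h1, hwj]
      · simp [h1, h2]
  · right; right; left; rw [heq false true hyi hyj]; funext k
    by_cases h1 : k = i
    · subst h1; rw [cflip_ne _ hij]; simp [hwi]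
    · by_cases h2 : k = j
      · subst h2; rw [cflip_self]; simp [h1, hwj]
      · rw [cflip_ne _ h2]; simp [h1, h2]
  · right; left; rw [heq true false hyi hyj]; funext k
    by_cases h1 : k = i
    · subst h1; rw [cflip_self]; simp [hwi]
    · by_cases h2 : k = j
      · subst h2; rw [cflip_ne _ (Ne.symm hij)]; simp [h1, hwj]
      · rw [cflip_ne _ h1]; simp [h1, h2]
  · right; right; right; rw [heq true true hyi hyj]; funext k
    by_cases h1 : k = i
    · subst h1; rw [cflip_ne _ hij, cflip_self]; simp [hwi]
    · by_cases h2 : k = j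
      · subst h2; rw [cflip_self, cflip_ne _ (Ne.symm hij)]; simp [h1, hwj]
      · rw [cflip_ne _ h2, cflip_ne _ h1]; simp [h1, h2]

lemma key_step {n : ℕ} (Φ : (Fin n → Bool) → Fin n → Bool)
    (huso : IsUSO Φ) (huni : TwoUpUniform Φ)
    (v : Fin n → Bool) (hinv : ∀ i, v i = true → Φ v i = true)
    (j : Fin n) (hj : Φ v j = false) :
    v j = false ∧ ∀ i, (cflip v j) i = true → Φ (cflip v j) i = true := by
  obtain ⟨hcons, hsink⟩ := huso
  have hvj : v j = false := by
    cases h : v j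
    · rfl
    · rw [hinv j h] at hj; exact absurd hj (by simp)
  refine ⟨hvj, ?_⟩
  intro i hi
  by_cases hij : i = j
  · subst hij
    have := hcons v i
    rw [hj] at this
    simpa using this
  · have hvi : v i = true := by rw [cflip_ne _ hij] at hi; exact hi
    -- w = cflip v i, the base of the 2-face
    set w := cflip v i with hw
    have hwi : w i = false := by rw [hw, cflip_self, hvi]; rfl
    have hwj : w j = false := by rw [hw, cflip_ne _ (Ne.symm hij)]; exact hvj
    have hΦwi : Φ w i = false := by
      have := hcons w i
      rw [hw, cflip_cflip] at this
      rw [hinv i hvi] at this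
      simpa using this
    by_contra hcon
    have hui : Φ (cflip v j) i = false := by
      cases h : Φ (cflip v j) i
      · rfl
      · exact absurd h hcon
    cases hΦwj : Φ w j
    · -- 2-up-uniform case
      obtain ⟨_, h2⟩ := huni w i j hij hwi hwj hΦwi hΦwj
      -- cflip w j = cflip (cflip v i) j = cflip (cflip v j) i
      have hcc : cflip w j = cflip (cflip v j) i := by
        rw [hw]; exact cflip_comm v i j hij
      rw [hcc] at h2
      have := hcons (cflip v j) i
      rw [h2, hui] at this
      exact this rfl
    · -- no sink in the 2-face: contradiction with unique sink
      obtain ⟨y, ⟨hysub, hysink⟩, _⟩ := hsink w {i, j}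
      have hyi : Φ y i = true := hysink i (by simp)
      have hyj : Φ y j = true := hysink j (by simp)
      rcases subcube_two w y i j hij hwi hwj hysub with h | h | h | h
      · rw [h, hΦwi] at hyi; exact absurd hyi (by simp)
      · rw [h, hw, cflip_cflip, hj] at hyj; exact absurd hyj (by simp)
      · have := hcons w j
        rw [hΦwj] at this
        rw [h] at hyj
        exact this hyj
      · have hcc : cflip (cflip w i) j = cflip v j := by
          rw [hw, cflip_cflip]
        rw [h, hcc, hui] at hyi; exact absurd hyi (by simp)

lemma weight_cflip {n : ℕ} (v : Fin n → Bool) (i : Fin n) (hv : v i = false) :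
    (Finset.univ.filter (fun k => cflip v i k = true)).card
      = (Finset.univ.filter (fun k => v k = true)).card + 1 := by
  have : (Finset.univ.filter (fun k => cflip v i k = true))
      = insert i (Finset.univ.filter (fun k => v k = true)) := by
    ext k
    by_cases h : k = i
    · subst h; simp [cflip_self, hv]
    · simp [cflip_ne _ h, h]
  rw [this, Finset.card_insert_of_notMem (by simp [hv])]


/-- in a 2-up-uniform USO with global sink `t`, every directed path
from the all-zeros vertex to `t` has length exactly `|t|` (the Hamming weight of
`t`), and every traversed edge flips a `0` to a `1`. -/
theorem twoUpUniform_paths_from_zero {n : ℕ} (Φ : (Fin n → Bool) → Fin n → Bool)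
    (huso : IsUSO Φ) (huni : TwoUpUniform Φ)
    (t : Fin n → Bool) (ht : ∀ i, Φ t i = true)
    (L : ℕ) (p : ℕ → (Fin n → Bool))
    (h0 : p 0 = fun _ => false) (hL : p L = t)
    (hstep : ∀ m < L, Step Φ (p m) (p (m + 1))) :
    L = (Finset.univ.filter (fun i => t i = true)).card ∧
      ∀ m < L, ∃ i, (p m) i = false ∧ Φ (p m) i = false ∧ p (m + 1) = cflip (p m) i := by
  have main : ∀ m, m ≤ L → (∀ i, p m i = true → Φ (p m) i = true) ∧
      (Finset.univ.filter (fun k => p m k = true)).card = m := by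
    intro m
    induction m with
    | zero =>
      intro _
      constructor
      · intro i hi; rw [h0] at hi; exact absurd hi (by simp)
      · rw [h0]; simp
    | succ m ih =>
      intro hm
      have hm' : m < L := Nat.lt_of_succ_le hm
      obtain ⟨hinv, hwt⟩ := ih (le_of_lt hm')
      obtain ⟨j, hj, hpj⟩ := hstep m hm'
      obtain ⟨hvj, hinv'⟩ := key_step Φ huso huni (p m) hinv j hj
      refine ⟨by rw [hpj]; exact hinv', ?_⟩
      rw [hpj, weight_cflip _ _ hvj, hwt]
  constructor
  · have := (main L le_rfl).2
    rw [hL] at this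
    exact this.symm
  · intro m hm
    obtain ⟨hinv, _⟩ := main m (le_of_lt hm)
    obtain ⟨j, hj, hpj⟩ := hstep m hm
    obtain ⟨hvj, _⟩ := key_step Φ huso huni (p m) hinv j hj
    exact ⟨j, hvj, hj, hpj⟩
end
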